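/- The polynomial p(z) = (z⁵ − 5z³ + 5z)/2 is a Shabat polynomial in Zapponi form: every critical value of p lies in {1, −1}, the sum of the distinct complex roots of p − 1 equals 1, and the sum of the distinct complex roots of p + 1 equals −1. (This is the SZ-polynomial of the chain tree with five edges.) -/
import Mathlib


open Polynomial

lemma sum_roots_helper (c a b : ℂ) (hab : a ≠ b) (hca : c ≠ a) (hcb : c ≠ b) :
    ((Polynomial.C (1/2 : ℂ) *
      ((X - C c) * ((X - C a) * (X - C b))^2)).roots.toFinset.sum id) = c + a + b := by
  have h1 : (X - C c : ℂ[X]) ≠ 0 := X_sub_C_ne_zero c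
  have h2 : (X - C a : ℂ[X]) ≠ 0 := X_sub_C_ne_zero a
  have h3 : (X - C b : ℂ[X]) ≠ 0 := X_sub_C_ne_zero b
  have hr : (Polynomial.C (1/2 : ℂ) *
      ((X - C c) * ((X - C a) * (X - C b))^2)).roots
      = {c} + (2 • ({a} + {b}) : Multiset ℂ) := by
    rw [roots_C_mul _ (by norm_num : (1/2:ℂ) ≠ 0),
      roots_mul (mul_ne_zero h1 (pow_ne_zero _ (mul_ne_zero h2 h3))),
      roots_pow, roots_mul (mul_ne_zero h2 h3), roots_X_sub_C, roots_X_sub_C,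
      roots_X_sub_C]
  rw [hr]
  have ht : ({c} + (2 • ({a} + {b}) : Multiset ℂ)).toFinset
      = insert c (insert a {b}) := by
    ext x
    simp [Multiset.mem_toFinset, or_assoc]
  rw [ht, Finset.sum_insert (by simp [hca, hcb]), Finset.sum_insert (by simp [hab])]
  simp [add_assoc]

lemma sqrt5_sq : ((Real.sqrt 5 : ℝ) : ℂ)^2 = 5 := by
  rw [← Complex.ofReal_pow, Real.sq_sqrt (by norm_num : (0:ℝ) ≤ 5)]
  norm_num

/-- The polynomial `p(z) = (z⁵ − 5z³ + 5z)/2` (the SZ-polynomial of the chain tree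
with five edges). -/
noncomputable def pSZ : Polynomial ℂ :=
  Polynomial.C (1 / 2 : ℂ) *
    (Polynomial.X ^ 5 - 5 * Polynomial.X ^ 3 + 5 * Polynomial.X)

/-- `p(z) = (z⁵ − 5z³ + 5z)/2` is a Shabat polynomial in Zapponi form: every
critical value of `p` lies in `{1, -1}`, and the sums of the distinct roots of
`p - 1` and `p + 1` are `1` and `-1` respectively. -/
theorem pSZ_is_shabat_zapponi :
    (∀ z : ℂ, (Polynomial.derivative pSZ).eval z = 0 →
      pSZ.eval z = 1 ∨ pSZ.eval z = -1) ∧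
    ((pSZ - 1).roots.toFinset.sum id) = 1 ∧
    ((pSZ + 1).roots.toFinset.sum id) = -1 := by
  set s : ℂ := ((Real.sqrt 5 : ℝ) : ℂ) with hs_def
  have hs : s ^ 2 = 5 := sqrt5_sq
  have hs0 : s ≠ 0 := by
    intro h; rw [h] at hs; norm_num at hs
  have hC2 : (C (2:ℂ) : ℂ[X]) = 2 := map_ofNat C 2
  have hCn2 : (C (-2:ℂ) : ℂ[X]) = -2 := by rw [map_neg, hC2]
  have hhalf : (C (1/2 : ℂ) : ℂ[X]) * 2 = 1 := by
    rw [← hC2, ← C_mul]; norm_num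
  refine ⟨?_, ?_, ?_⟩
  · intro z hz
    have hd : (Polynomial.derivative pSZ).eval z
        = (1/2 : ℂ) * (5 * z^4 - 15 * z^2 + 5) := by
      simp [pSZ]; ring
    rw [hd] at hz
    have hz4 : z^4 - 3*z^2 + 1 = 0 := by linear_combination (2/5 : ℂ) * hz
    have hev : pSZ.eval z = (1/2 : ℂ) * (z^5 - 5*z^3 + 5*z) := by
      simp [pSZ]
    have key : (pSZ.eval z - 1) * (pSZ.eval z + 1) = 0 := by
      rw [hev]
      linear_combination ((1/4:ℂ) * (z^2 - 4) * (z^4 - 3*z^2 + 1)) * hz4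
    rcases mul_eq_zero.mp key with h | h
    · exact Or.inl (by linear_combination h)
    · exact Or.inr (by linear_combination h)
  · -- roots of p - 1 :  2, (-1 ± √5)/2
    set a : ℂ := (-1 + s)/2 with ha_def
    set b : ℂ := (-1 - s)/2 with hb_def
    have hprod : (C a * C b : ℂ[X]) = -1 := by
      rw [← C_mul]
      have : a * b = -1 := by
        rw [ha_def, hb_def]; linear_combination (-(1:ℂ)/4) * hs
      rw [this]; simp
    have hsum : (C a + C b : ℂ[X]) = -1 := by
      rw [← C_add]
      have : a + b = -1 := by rw [ha_def, hb_def]; ring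
      rw [this]; simp
    have h1 : ((X - C a) * (X - C b) : ℂ[X]) = X^2 + X - 1 := by
      linear_combination (-X : ℂ[X]) * hsum + hprod
    have hfac : pSZ - 1 = Polynomial.C (1/2 : ℂ) *
        ((X - C 2) * ((X - C a) * (X - C b))^2) := by
      rw [h1, pSZ, hC2]
      linear_combination hhalf
    have hab : a ≠ b := fun h => hs0 (by linear_combination h)
    have h2a : (2:ℂ) ≠ a := by
      intro h
      have : s = 5 := by rw [ha_def] at h; linear_combination (-2:ℂ) * h
      rw [this] at hs; norm_num at hs
    have h2b : (2:ℂ) ≠ b := by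
      intro h
      have : s = -5 := by rw [hb_def] at h; linear_combination (2:ℂ) * h
      rw [this] at hs; norm_num at hs
    rw [hfac, sum_roots_helper 2 a b hab h2a h2b, ha_def, hb_def]; ring
  · -- roots of p + 1 :  -2, (1 ± √5)/2
    set a : ℂ := (1 + s)/2 with ha_def
    set b : ℂ := (1 - s)/2 with hb_def
    have hprod : (C a * C b : ℂ[X]) = -1 := by
      rw [← C_mul]
      have : a * b = -1 := by
        rw [ha_def, hb_def]; linear_combination (-(1:ℂ)/4) * hs
      rw [this]; simp
    have hsum : (C a + C b : ℂ[X]) = 1 := by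
      rw [← C_add]
      have : a + b = 1 := by rw [ha_def, hb_def]; ring
      rw [this]; simp
    have h1 : ((X - C a) * (X - C b) : ℂ[X]) = X^2 - X - 1 := by
      linear_combination (-X : ℂ[X]) * hsum + hprod
    have hfac : pSZ + 1 = Polynomial.C (1/2 : ℂ) *
        ((X - C (-2)) * ((X - C a) * (X - C b))^2) := by
      rw [h1, pSZ, hCn2]
      linear_combination -hhalf
    have hab : a ≠ b := fun h => hs0 (by linear_combination h)
    have h2a : (-2:ℂ) ≠ a := by
      intro h
      have : s = -5 := by rw [ha_def] at h; linear_combination (-2:ℂ) * h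
      rw [this] at hs; norm_num at hs
    have h2b : (-2:ℂ) ≠ b := by
      intro h
      have : s = 5 := by rw [hb_def] at h; linear_combination (2:ℂ) * h
      rw [this] at hs; norm_num at hs
    rw [hfac, sum_roots_helper (-2) a b hab h2a h2b, ha_def, hb_def]; ring
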